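/- Let A be a positive definite symmetric (n+1)×(n+1) real matrix with Cholesky factorization A = L Lᵀ. If x_1, ..., x_N lie on the ellipsoid {z : ⟨z, A z⟩ = 1} and satisfy the dynamics ẋ_i = (I − x_i x_iᵀ A) Σ_{j ∈ N_i} a_{ij} x_j, then the transformed variables y_i = Lᵀ x_i lie on the unit sphere and satisfy ẏ_i = (I − y_i y_iᵀ) Σ_{j ∈ N_i} a_{ij} y_j. -/

import Mathlib

/-!
Since `A = L Lᵀ`, the map `x ↦ Lᵀ x` is an isometry from `(ℝⁿ⁺¹, ⟨·, A ·⟩)` to Euclidean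
`ℝⁿ⁺¹`: `⟨Lᵀ u, Lᵀ v⟩ = ⟨u, A v⟩`. It therefore carries the ellipsoid into the unit sphere and
the `A`-orthogonal projection `v ↦ v - ⟨x, A v⟩ x` onto the Euclidean one `w ↦ w - ⟨y, w⟩ y`;
being linear, it commutes with differentiation and with the neighbour sums.
-/

open Matrix

theorem Matrix.transpose_mulVec_dotProduct_transpose_mulVec {m n R : Type*} [Fintype m]
    [Fintype n] [CommSemiring R] (L : Matrix m n R) (u v : m → R) :
    (Lᵀ *ᵥ u) ⬝ᵥ (Lᵀ *ᵥ v) = u ⬝ᵥ ((L * Lᵀ) *ᵥ v) := by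
  rw [← mulVec_mulVec, dotProduct_mulVec u L, ← vecMul_transpose, transpose_transpose]

theorem Matrix.transpose_mulVec_sub_dotProduct_smul {m n R : Type*} [Fintype m] [Fintype n]
    [CommRing R] (L : Matrix m n R) (x v : m → R) :
    Lᵀ *ᵥ (v - (x ⬝ᵥ ((L * Lᵀ) *ᵥ v)) • x) =
      Lᵀ *ᵥ v - ((Lᵀ *ᵥ x) ⬝ᵥ (Lᵀ *ᵥ v)) • Lᵀ *ᵥ x := by
  rw [mulVec_sub, mulVec_smul, transpose_mulVec_dotProduct_transpose_mulVec]

theorem HasDerivAt.matrix_mulVec {m n : Type*} [Fintype m] [Fintype n] (M : Matrix m n ℝ)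
    {f : ℝ → n → ℝ} {f' : n → ℝ} {t : ℝ} (hf : HasDerivAt f f' t) :
    HasDerivAt (fun s => M *ᵥ f s) (M *ᵥ f') t :=
  (mulVecLin M).toContinuousLinearMap.hasFDerivAt.comp_hasDerivAt t hf

theorem Matrix.mulVec_sum_ite_smul {ι m n R : Type*} [Fintype ι] [Fintype n] [CommSemiring R]
    (M : Matrix m n R) (p : ι → Prop) [DecidablePred p] (c : ι → R) (x : ι → n → R) :
    M *ᵥ (∑ j, if p j then c j • x j else 0) = ∑ j, if p j then c j • M *ᵥ x j else 0 := by
  simp only [mulVec_sum, apply_ite (M *ᵥ ·), mulVec_smul, mulVec_zero]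

theorem stmt5_general (n N : ℕ) (A L : Matrix (Fin (n + 1)) (Fin (n + 1)) ℝ)
    (hAL : A = L * Lᵀ)
    (G : SimpleGraph (Fin N)) [DecidableRel G.Adj]
    (a : Fin N → Fin N → ℝ)
    (x : Fin N → ℝ → Fin (n + 1) → ℝ)
    (hell : ∀ i t, ∑ k, x i t k * A.mulVec (x i t) k = 1)
    (hdyn : ∀ i t, HasDerivAt (x i)
      ((∑ j, if G.Adj i j then a i j • x j t else 0) -
        (∑ k, x i t k * A.mulVec (∑ j, if G.Adj i j then a i j • x j t else 0) k)
          • x i t) t) :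
    ∀ i t,
      Real.sqrt (∑ k, (Lᵀ.mulVec (x i t)) k ^ 2) = 1 ∧
      HasDerivAt (fun s => Lᵀ.mulVec (x i s))
        ((∑ j, if G.Adj i j then a i j • Lᵀ.mulVec (x j t) else 0) -
          (∑ k, (Lᵀ.mulVec (x i t)) k *
            (∑ j, if G.Adj i j then a i j • Lᵀ.mulVec (x j t) else 0) k)
            • Lᵀ.mulVec (x i t)) t := by
  subst hAL
  intro i t
  constructor
  · have hnorm : (Lᵀ *ᵥ x i t) ⬝ᵥ (Lᵀ *ᵥ x i t) = 1 := by
      rw [transpose_mulVec_dotProduct_transpose_mulVec]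
      exact hell i t
    simpa only [dotProduct, sq, Real.sqrt_eq_one] using hnorm
  · convert (hdyn i t).matrix_mulVec Lᵀ using 1
    rw [← mulVec_sum_ite_smul]
    exact (transpose_mulVec_sub_dotProduct_smul L (x i t) _).symm

theorem stmt5 (n N : ℕ) (A L : Matrix (Fin (n + 1)) (Fin (n + 1)) ℝ)
    (hA : A.PosDef) (hAL : A = L * Lᵀ)
    (G : SimpleGraph (Fin N)) [DecidableRel G.Adj]
    (a : Fin N → Fin N → ℝ) (ha : ∀ i j, 0 ≤ a i j)
    (x : Fin N → ℝ → Fin (n + 1) → ℝ)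
    (hell : ∀ i t, ∑ k, x i t k * A.mulVec (x i t) k = 1)
    (hdyn : ∀ i t, HasDerivAt (x i)
      ((∑ j, if G.Adj i j then a i j • x j t else 0) -
        (∑ k, x i t k * A.mulVec (∑ j, if G.Adj i j then a i j • x j t else 0) k)
          • x i t) t) :
    ∀ i t,
      Real.sqrt (∑ k, (Lᵀ.mulVec (x i t)) k ^ 2) = 1 ∧
      HasDerivAt (fun s => Lᵀ.mulVec (x i s))
        ((∑ j, if G.Adj i j then a i j • Lᵀ.mulVec (x j t) else 0) -
          (∑ k, (Lᵀ.mulVec (x i t)) k *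
            (∑ j, if G.Adj i j then a i j • Lᵀ.mulVec (x j t) else 0) k)
            • Lᵀ.mulVec (x i t)) t :=
  stmt5_general n N A L hAL G a x hell hdyn
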